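/- Let λ be a Young diagram and j a nonempty column of λ that contains no special box, and set h = top(j). Then the boxes (h, j+1), (h−1, j+2), …, (1, j+h) all belong to λ. -/

import Mathlib

open scoped Classical

noncomputable section

namespace DriftKL

/-- `(i,j)` is a box of the Young diagram of `lam` (French notation, rows indexed
bottom-to-top, everything 1-indexed). -/
def InShape (lam : ℕ → ℕ) (i j : ℕ) : Prop := 1 ≤ i ∧ 1 ≤ j ∧ j ≤ lam i

/-- `lam` encodes a partition `λ₁ ≥ ⋯ ≥ λ_ℓ > 0` (1-indexed; `0` outside `[1,ℓ]`). -/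
def IsPartitionFun (ℓ : ℕ) (lam : ℕ → ℕ) : Prop :=
  (∀ i, 1 ≤ i → i ≤ ℓ → 1 ≤ lam i) ∧
  (∀ i j, 1 ≤ i → i ≤ j → j ≤ ℓ → lam j ≤ lam i) ∧
  (∀ i, i = 0 ∨ ℓ < i → lam i = 0)

/-- The Finset of boxes of the Young diagram of `lam`. -/
def shapeBoxes (ℓ : ℕ) (lam : ℕ → ℕ) : Finset (ℕ × ℕ) :=
  (Finset.Icc 1 ℓ ×ˢ Finset.Icc 1 (lam 1)).filter (fun p => p.2 ≤ lam p.1)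

/-- Semistandardness: positive entries, rows weakly increase left-to-right,
columns strictly increase bottom-to-top. -/
def IsSSYT (lam : ℕ → ℕ) (T : ℕ → ℕ → ℕ) : Prop :=
  (∀ i j, InShape lam i j → 1 ≤ T i j) ∧
  (∀ i j, InShape lam i j → InShape lam i (j+1) → T i j ≤ T i (j+1)) ∧
  (∀ i j, InShape lam i j → InShape lam (i+1) j → T i j < T (i+1) j)

/-- Flagged semistandard Young tableaux of shape `lam`, flagged by `b`,
represented as functions vanishing off the shape. -/
def SSYTset (lam b : ℕ → ℕ) : Set (ℕ → ℕ → ℕ) :=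
  {T | IsSSYT lam T ∧ (∀ i j, InShape lam i j → T i j ≤ b i) ∧
       (∀ i j, ¬ InShape lam i j → T i j = 0)}

/-- Boundary convention: `T(i,0) = 1` for `i > 0`, and `T(0,j) = 0`. -/
def TxC (T : ℕ → ℕ → ℕ) (i j : ℕ) : ℕ :=
  if i = 0 then 0 else if j = 0 then 1 else T i j

/-- The saturation `sat(T)`: `sat(T)(i,j) = [max{T(i,j-1), 1+T(i-1,j)}, T(i,j)]`. -/
def satF (lam : ℕ → ℕ) (T : ℕ → ℕ → ℕ) (i j : ℕ) : Finset ℕ :=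
  if InShape lam i j then
    Finset.Icc (max (TxC T i (j - 1)) (TxC T (i - 1) j + 1)) (T i j)
  else ∅

/-- `depth(T) = |sat(T)| - |λ|`. -/
def depthT (ℓ : ℕ) (lam : ℕ → ℕ) (T : ℕ → ℕ → ℕ) : ℕ :=
  (∑ p ∈ shapeBoxes ℓ lam, (satF lam T p.1 p.2).card) - (shapeBoxes ℓ lam).card

/-- Flagged set-valued semistandard fillings: each box carries a nonempty finite
set of positive integers bounded by the flag, such that every choice of one entry
per box is semistandard.  Off the shape the value is `∅`. -/
def SetSSYTset (lam b : ℕ → ℕ) : Set (ℕ → ℕ → Finset ℕ) :=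
  {U | (∀ i j, InShape lam i j → (U i j).Nonempty) ∧
       (∀ i j, ¬ InShape lam i j → U i j = ∅) ∧
       (∀ i j, InShape lam i j → ∀ x ∈ U i j, 1 ≤ x ∧ x ≤ b i) ∧
       (∀ T : ℕ → ℕ → ℕ, (∀ i j, InShape lam i j → T i j ∈ U i j) →
          (∀ i j, InShape lam i j → InShape lam i (j+1) → T i j ≤ T i (j+1)) ∧
          (∀ i j, InShape lam i j → InShape lam (i+1) j → T i j < T (i+1) j))}

/-- `ex(U) = |U| - |λ|`. -/
def exU (ℓ : ℕ) (lam : ℕ → ℕ) (U : ℕ → ℕ → Finset ℕ) : ℕ :=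
  (∑ p ∈ shapeBoxes ℓ lam, (U p.1 p.2).card) - (shapeBoxes ℓ lam).card

/-- The extension of a filling `T` of `λ` by `T(i,j) = ∞` if (`i > 0` and
`(i,j) ∉ λ`) or `j > λ₁`, and `T(0,j) = 0` for `1 ≤ j ≤ λ₁`. -/
def extT (lam : ℕ → ℕ) (T : ℕ → ℕ → ℕ) (i j : ℕ) : ℕ∞ :=
  if lam 1 < j then ⊤
  else if i = 0 then 0
  else if InShape lam i j then (T i j : ℕ∞) else ⊤

/-- `T` satisfies the recursion `T(i,j) = min{T(i+1,j) - 1, T(i-1,j+1) + 1}`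
at the box `(i,j)` (with the extension conventions). -/
def RecursionAt (lam : ℕ → ℕ) (T : ℕ → ℕ → ℕ) (i j : ℕ) : Prop :=
  (T i j : ℕ∞) = min (extT lam T (i + 1) j - 1) (extT lam T (i - 1) (j + 1) + 1)

/-- `(i,j)` is a northeast corner of `λ`. -/
def NECorner (lam : ℕ → ℕ) (i j : ℕ) : Prop :=
  InShape lam i j ∧ ¬ InShape lam (i + 1) j ∧ ¬ InShape lam i (j + 1)

/-- `top(j)`: the largest `i` with `(i,j) ∈ λ` (`0` if the column is empty). -/
def colTop (lam : ℕ → ℕ) (j : ℕ) : ℕ := sSup {i | InShape lam i j}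

/-- `|arm(i,j)|`. -/
def armLen (lam : ℕ → ℕ) (i j : ℕ) : ℕ := lam i - j

/-- `|leg(i,j)|`. -/
def legLen (lam : ℕ → ℕ) (i j : ℕ) : ℕ := colTop lam j - i

/-- `(p,q)` lies in `{(i,j)} ∪ arm(i,j) ∪ leg(i,j)`. -/
def InCross (lam : ℕ → ℕ) (i j p q : ℕ) : Prop :=
  (p = i ∧ j ≤ q ∧ q ≤ lam i) ∨ (q = j ∧ i ≤ p ∧ p ≤ colTop lam j)

/-- `(i,j) ∈ λ`, has equal arm and leg lengths, and no box of its cross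
satisfies `Prev` (the "already special" predicate). -/
def CandAt (lam : ℕ → ℕ) (Prev : ℕ → ℕ → Prop) (i j : ℕ) : Prop :=
  InShape lam i j ∧ armLen lam i j = legLen lam i j ∧
    ∀ p q, InCross lam i j p q → ¬ Prev p q

/-- `SpecialLevels lam z i j` holds iff `(i,j)` is `y`-special for some `y < z`:
a `z`-special box is one which is maximal (componentwise) among candidates
relative to the boxes that are `y`-special for `y < z`. -/
def SpecialLevels (lam : ℕ → ℕ) : ℕ → ℕ → ℕ → Prop
  | 0 => fun _ _ => False
  | z + 1 => fun i j =>
      SpecialLevels lam z i j ∨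
        (CandAt lam (SpecialLevels lam z) i j ∧
          ∀ p q, CandAt lam (SpecialLevels lam z) p q → i ≤ p → j ≤ q → i = p ∧ j = q)

/-- `(i,j)` is special, i.e. `z`-special for some `z`. -/
def IsSpecial (lam : ℕ → ℕ) (i j : ℕ) : Prop := ∃ z, SpecialLevels lam z i j

/-- The flag `b_i = max{m ≥ 1 : B_m ≥ λ_i + m - i}` attached to partitions `λ ⊆ B`. -/
def flagOfPart (lam B : ℕ → ℕ) (i : ℕ) : ℕ :=
  sSup {m : ℕ | 1 ≤ m ∧ (lam i : ℤ) + m - i ≤ (B m : ℤ)}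

/-!
Let `h = top(j)`. If some box `(h + 1 - k, j + k)` is missing, take the highest row `a ≤ h`
with `λ_a + a ≤ j + h`; then `λ_a + a = j + h`, so `(a, j)` has arm = leg, and every row strictly
between `a` and `h` reaches beyond the antidiagonal `i + q = j + h`. The latter forces
arm < leg at every other box of the arm of `(a, j)`, while the column of `(a, j)` contains no
special box by hypothesis. Hence no special box ever enters the cross of `(a, j)`, so `(a, j)`
is a candidate at every level. But a candidate at level `z` produces a new `(z+1)`-special box,
so the special boxes would grow forever inside the finite diagram.
-/

section
variable {ℓ : ℕ} {lam : ℕ → ℕ}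

theorem InShape.le_length (hlam : IsPartitionFun ℓ lam) {i j : ℕ} (h : InShape lam i j) :
    i ≤ ℓ := by
  by_contra! hi
  have := hlam.2.2 i (.inr hi)
  have := h.2.1
  have := h.2.2
  omega

theorem InShape.mem_shapeBoxes (hlam : IsPartitionFun ℓ lam) {i j : ℕ} (h : InShape lam i j) :
    (i, j) ∈ shapeBoxes ℓ lam := by
  have hiℓ := h.le_length hlam
  have := hlam.2.1 1 i le_rfl h.1 hiℓ
  obtain ⟨hi, hj, hji⟩ := h
  simp only [shapeBoxes, Finset.mem_filter, Finset.mem_product, Finset.mem_Icc]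
  omega

theorem bddAbove_column (hlam : IsPartitionFun ℓ lam) (j : ℕ) :
    BddAbove {i | InShape lam i j} :=
  ⟨ℓ, fun _ hi => InShape.le_length hlam hi⟩

theorem InShape.le_colTop (hlam : IsPartitionFun ℓ lam) {i j : ℕ} (h : InShape lam i j) :
    i ≤ colTop lam j :=
  le_csSup (bddAbove_column hlam j) h

theorem InShape.inShape_colTop (hlam : IsPartitionFun ℓ lam) {i j : ℕ} (h : InShape lam i j) :
    InShape lam (colTop lam j) j :=
  Nat.sSup_mem ⟨i, h⟩ (bddAbove_column hlam j)

theorem SpecialLevels.armLen_eq_legLen :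
    ∀ {z i j : ℕ}, SpecialLevels lam z i j → armLen lam i j = legLen lam i j
  | _ + 1, _, _, .inl h => h.armLen_eq_legLen
  | _ + 1, _, _, .inr h => h.1.2.1

theorem exists_specialLevels_succ_of_candAt (hlam : IsPartitionFun ℓ lam) {z a c : ℕ}
    (hc : CandAt lam (SpecialLevels lam z) a c) :
    ∃ b ∈ shapeBoxes ℓ lam, SpecialLevels lam (z + 1) b.1 b.2 ∧ ¬ SpecialLevels lam z b.1 b.2 := by
  let C := (shapeBoxes ℓ lam).filter fun b => CandAt lam (SpecialLevels lam z) b.1 b.2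
  obtain ⟨m, hmC, hmax⟩ :=
    C.exists_maximal ⟨(a, c), Finset.mem_filter.2 ⟨hc.1.mem_shapeBoxes hlam, hc⟩⟩
  obtain ⟨hm, hmcand⟩ := Finset.mem_filter.1 hmC
  refine ⟨m, hm, .inr ⟨hmcand, fun p q hpq hp hq => ?_⟩, ?_⟩
  · have hle : m ≤ (p, q) := ⟨hp, hq⟩
    have := le_antisymm hle (hmax (Finset.mem_filter.2 ⟨hpq.1.mem_shapeBoxes hlam, hpq⟩) hle)
    exact Prod.ext_iff.1 this
  · exact hmcand.2.2 _ _ (.inl ⟨rfl, le_rfl, hmcand.1.2.2⟩)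

def specialBoxes (ℓ : ℕ) (lam : ℕ → ℕ) (z : ℕ) : Finset (ℕ × ℕ) :=
  (shapeBoxes ℓ lam).filter fun b => SpecialLevels lam z b.1 b.2

theorem specialBoxes_ssubset_succ (hlam : IsPartitionFun ℓ lam) {z a c : ℕ}
    (hc : CandAt lam (SpecialLevels lam z) a c) :
    specialBoxes ℓ lam z ⊂ specialBoxes ℓ lam (z + 1) := by
  obtain ⟨b, hb, hnew, hold⟩ := exists_specialLevels_succ_of_candAt hlam hc
  refine Finset.ssubset_iff_of_subset (Finset.monotone_filter_right _ fun _ _ => .inl) |>.2 ?_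
  exact ⟨b, Finset.mem_filter.2 ⟨hb, hnew⟩, fun h => hold (Finset.mem_filter.1 h).2⟩

theorem le_card_specialBoxes (hlam : IsPartitionFun ℓ lam) {a c : ℕ}
    (hc : ∀ z, CandAt lam (SpecialLevels lam z) a c) (z : ℕ) :
    z ≤ (specialBoxes ℓ lam z).card := by
  induction z with
  | zero => exact Nat.zero_le _
  | succ z ih => exact ih.trans_lt (Finset.card_lt_card (specialBoxes_ssubset_succ hlam (hc z)))

theorem not_forall_candAt (hlam : IsPartitionFun ℓ lam) (a c : ℕ) :
    ¬ ∀ z, CandAt lam (SpecialLevels lam z) a c := fun hc =>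
  let n := (shapeBoxes ℓ lam).card
  (le_card_specialBoxes hlam hc (n + 1)).not_gt (Nat.lt_succ_of_le (Finset.card_filter_le _ _))

theorem exists_highest_row_on_antidiagonal (hlam : IsPartitionFun ℓ lam) {h j i₀ : ℕ}
    (hh : InShape lam h j) (hi₀₁ : 1 ≤ i₀) (hi₀ : i₀ ≤ h) (hrow : lam i₀ + i₀ ≤ j + h) :
    ∃ a, i₀ ≤ a ∧ a ≤ h ∧ lam a + a = j + h ∧ ∀ i, a < i → i ≤ h → j + h < lam i + i := by
  obtain ⟨a, hPa, hi₀a, hah, habove⟩ : ∃ a, lam a + a ≤ j + h ∧ i₀ ≤ a ∧ a ≤ h ∧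
      ∀ i, a < i → i ≤ h → j + h < lam i + i :=
    let P i := lam i + i ≤ j + h
    ⟨Nat.findGreatest P h, Nat.findGreatest_spec (P := P) hi₀ hrow,
      Nat.le_findGreatest hi₀ hrow, Nat.findGreatest_le h,
      fun _ hai hih => not_le.1 (Nat.findGreatest_is_greatest (P := P) hai hih)⟩
  refine ⟨a, hi₀a, hah, ?_, habove⟩
  rcases hah.lt_or_eq with hlt | rfl
  · have := habove (a + 1) a.lt_succ_self hlt
    have := hlam.2.1 a (a + 1) (by omega) (by omega) ((hh.le_length hlam).trans' hlt)
    omega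
  · have := hh.2.2
    omega

theorem armLen_lt_legLen_of_above_antidiagonal (hlam : IsPartitionFun ℓ lam) {a h j q : ℕ}
    (ha : lam a + a = j + h) (habove : ∀ i, a < i → i ≤ h → j + h < lam i + i)
    (hjq : j < q) (hqa : q ≤ lam a) :
    armLen lam a q < legLen lam a q := by
  have hr := habove (j + h + 1 - q) (by omega) (by omega)
  have : j + h + 1 - q ≤ colTop lam q := InShape.le_colTop hlam ⟨by omega, by omega, by omega⟩
  simp only [armLen, legLen]
  omega

theorem candAt_of_on_antidiagonal (hlam : IsPartitionFun ℓ lam) {a j : ℕ}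
    (hnos : ¬ ∃ i, IsSpecial lam i j) (hj : 1 ≤ j) (ha₁ : 1 ≤ a) (hah : a ≤ colTop lam j)
    (ha : lam a + a = j + colTop lam j)
    (habove : ∀ i, a < i → i ≤ colTop lam j → j + colTop lam j < lam i + i) (z : ℕ) :
    CandAt lam (SpecialLevels lam z) a j := by
  refine ⟨⟨ha₁, hj, by omega⟩, by simp only [armLen, legLen]; omega, ?_⟩
  rintro p q (⟨rfl, hjq, hqa⟩ | ⟨rfl, -⟩) hspec
  · rcases hjq.eq_or_lt with rfl | hjq
    · exact hnos ⟨p, z, hspec⟩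
    · exact (armLen_lt_legLen_of_above_antidiagonal hlam ha habove hjq hqa).ne
        hspec.armLen_eq_legLen
  · exact hnos ⟨p, z, hspec⟩

end

/-- If column `j` of `λ` is nonempty and contains no special
box, then with `h = top(j)` the boxes `(h, j+1), (h-1, j+2), …, (1, j+h)` all
belong to `λ`. -/
theorem statement17 (ℓ : ℕ) (lam : ℕ → ℕ)
    (hlam : IsPartitionFun ℓ lam)
    (j : ℕ) (hj : InShape lam 1 j)
    (hnos : ¬ ∃ i, IsSpecial lam i j) :
    ∀ k, 1 ≤ k → k ≤ colTop lam j →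
      InShape lam (colTop lam j + 1 - k) (j + k) := by
  intro k hk₁ hkh
  by_contra hbox
  have hrow : lam (colTop lam j + 1 - k) + (colTop lam j + 1 - k) ≤ j + colTop lam j := by
    by_contra
    exact hbox ⟨by omega, by omega, by omega⟩
  obtain ⟨a, ha₁, hah, ha, habove⟩ :=
    exists_highest_row_on_antidiagonal hlam (hj.inShape_colTop hlam) (by omega) (by omega) hrow
  exact not_forall_candAt hlam a j
    (candAt_of_on_antidiagonal hlam hnos hj.2.1 (by omega) hah ha habove)

end DriftKL
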